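/- Let u, w ∈ S_n with u ≠ w. There exists an increasing path of length r from u to w in the extended k-Bruhat order (labels strictly increasing) if and only if w = u·t_{a_1 b_1}⋯t_{a_r b_r} with each step a k-edge and the b_i pairwise distinct. Moreover, when such an increasing path exists it is unique. -/

import Mathlib

/-- `IsKPath k u l` : starting from `u`, the list of position pairs `l`
describes a path of `k`-edges in the Bruhat graph of `S_n`. -/
def IsKPath {n : ℕ} (k : ℕ) : Equiv.Perm (Fin n) → List (Fin n × Fin n) → Prop
  | _, [] => True
  | u, p :: l => p.1.val < k ∧ k ≤ p.2.val ∧ u p.1 < u p.2 ∧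
      IsKPath k (u * Equiv.swap p.1 p.2) l

/-- The labels `τ_i = w_{i-1}(a_i)` of the edges of a path. -/
def pathLabels {n : ℕ} : Equiv.Perm (Fin n) → List (Fin n × Fin n) → List (Fin n)
  | _, [] => []
  | u, p :: l => u p.1 :: pathLabels (u * Equiv.swap p.1 p.2) l

/-- The endpoint `u · t_{a₁b₁} ⋯ t_{a_m b_m}` of a path starting at `u`. -/
def pathEnd {n : ℕ} (u : Equiv.Perm (Fin n)) (l : List (Fin n × Fin n)) : Equiv.Perm (Fin n) :=
  u * (l.map fun p => Equiv.swap p.1 p.2).prod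

/-
For a path whose `b`'s are distinct, each `b_i` is moved only by its own step, so the endpoint
`w` satisfies `w(b_i) = τ_i`, and the `b_i` are exactly the positions `b ≥ k` with `u(b) ≠ w(b)`.
An increasing path has distinct `b`'s: after step `i` the value at `b_i` is `τ_i`, below every
later label, whereas a step at `b_i` needs a label below the value there. Hence an increasing path
runs through these positions in increasing order of `w`, which determines it.
Conversely, two consecutive steps with labels out of order move four distinct positions and
commute, so insertion sort turns a path with distinct `b`'s into an increasing one with the same
endpoint.
-/

namespace Equiv.Perm

variable {α : Type*} [DecidableEq α]

lemma mul_swap_apply_of_ne_of_ne (u : Perm α) {a b x : α} (ha : x ≠ a) (hb : x ≠ b) :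
    (u * swap a b) x = u x := by
  rw [mul_apply, swap_apply_of_ne_of_ne ha hb]

lemma mul_swap_apply_left (u : Perm α) (a b : α) : (u * swap a b) a = u b := by
  rw [mul_apply, swap_apply_left]

lemma mul_swap_apply_right (u : Perm α) (a b : α) : (u * swap a b) b = u a := by
  rw [mul_apply, swap_apply_right]

end Equiv.Perm

open Equiv Perm

variable {n k : ℕ} {u v : Perm (Fin n)} {p q : Fin n × Fin n} {l l₁ l₂ s : List (Fin n × Fin n)}

lemma pathEnd_nil (u : Perm (Fin n)) : pathEnd u [] = u := by
  simp [pathEnd]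

lemma pathEnd_cons (u : Perm (Fin n)) (p : Fin n × Fin n) (l : List (Fin n × Fin n)) :
    pathEnd u (p :: l) = pathEnd (u * swap p.1 p.2) l := by
  simp [pathEnd, mul_assoc]

namespace IsKPath

lemma pathEnd_apply_of_not_mem (h : IsKPath k u l) {x : Fin n} (hx : k ≤ x.val)
    (hxl : x ∉ l.map Prod.snd) : pathEnd u l x = u x := by
  induction l generalizing u with
  | nil => rw [pathEnd_nil]
  | cons p l ih =>
    obtain ⟨hp₁, -, -, h⟩ := h
    rw [List.map_cons, List.mem_cons, not_or] at hxl
    rw [pathEnd_cons, ih h hxl.2, mul_swap_apply_of_ne_of_ne _ (by rintro rfl; omega) hxl.1]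

lemma pathLabels_eq_map (h : IsKPath k u l) (hnd : (l.map Prod.snd).Nodup) :
    pathLabels u l = (l.map Prod.snd).map (pathEnd u l) := by
  induction l generalizing u with
  | nil => rfl
  | cons p l ih =>
    obtain ⟨-, hp₂, -, h⟩ := h
    rw [List.map_cons, List.nodup_cons] at hnd
    rw [pathLabels, List.map_cons, List.map_cons, pathEnd_cons, ih h hnd.2,
      pathEnd_apply_of_not_mem h hp₂ hnd.1, mul_swap_apply_right]

lemma pathEnd_apply_snd (h : IsKPath k u (p :: l)) (hnd : ((p :: l).map Prod.snd).Nodup) :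
    pathEnd u (p :: l) p.2 = u p.1 := by
  have := pathLabels_eq_map h hnd
  rw [pathLabels, List.map_cons] at this
  exact (List.cons_eq_cons.1 this).1.symm

lemma pathEnd_ne_self (h : IsKPath k u (p :: l)) (hnd : ((p :: l).map Prod.snd).Nodup) :
    pathEnd u (p :: l) ≠ u := by
  intro he
  have hlt := h.2.2.1
  rw [← pathEnd_apply_snd h hnd, he] at hlt
  exact lt_irrefl _ hlt

lemma not_mem_map_snd_of_lt_pathLabels (h : IsKPath k u l) {b : Fin n}
    (hb : ∀ τ ∈ pathLabels u l, u b < τ) : b ∉ l.map Prod.snd := by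
  induction l generalizing u with
  | nil => simp
  | cons p l ih =>
    obtain ⟨-, -, hlt, h⟩ := h
    have hbp₁ : b ≠ p.1 := by
      rintro rfl
      exact lt_irrefl _ (hb _ List.mem_cons_self)
    have hbp₂ : b ≠ p.2 := by
      rintro rfl
      exact lt_asymm hlt (hb _ List.mem_cons_self)
    rw [List.map_cons, List.mem_cons, not_or]
    refine ⟨hbp₂, ih h fun τ hτ => ?_⟩
    rw [mul_swap_apply_of_ne_of_ne _ hbp₁ hbp₂]
    exact hb τ (List.mem_cons_of_mem _ hτ)

lemma nodup_of_increasing (h : IsKPath k u l) (hc : (pathLabels u l).IsChain (· < ·)) :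
    (l.map Prod.snd).Nodup := by
  induction l generalizing u with
  | nil => exact List.nodup_nil
  | cons p l ih =>
    obtain ⟨-, -, -, h⟩ := h
    rw [pathLabels, List.isChain_iff_pairwise, List.pairwise_cons] at hc
    rw [List.map_cons, List.nodup_cons]
    refine ⟨not_mem_map_snd_of_lt_pathLabels h ?_, ih h (List.isChain_iff_pairwise.2 hc.2)⟩
    rw [mul_swap_apply_right]
    exact hc.1

lemma pathEnd_snd_le (h : IsKPath k u (p :: l)) (hc : (pathLabels u (p :: l)).IsChain (· < ·))
    {b : Fin n} (hb : k ≤ b.val) (hbu : u b ≠ pathEnd u (p :: l) b) :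
    pathEnd u (p :: l) p.2 ≤ pathEnd u (p :: l) b := by
  have hnd := nodup_of_increasing h hc
  have hmem : b ∈ (p :: l).map Prod.snd := by
    by_contra hnot
    exact hbu (pathEnd_apply_of_not_mem h hb hnot).symm
  rw [pathLabels_eq_map h hnd, List.isChain_iff_pairwise, List.map_cons, List.pairwise_map,
    List.pairwise_cons] at hc
  rw [List.map_cons, List.mem_cons] at hmem
  rcases hmem with rfl | hmem
  · exact le_rfl
  · exact (hc.1 b hmem).le

lemma head_eq_of_increasing (h₁ : IsKPath k u (p :: l₁)) (h₂ : IsKPath k u (q :: l₂))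
    (hc₁ : (pathLabels u (p :: l₁)).IsChain (· < ·))
    (hc₂ : (pathLabels u (q :: l₂)).IsChain (· < ·))
    (hend : pathEnd u (p :: l₁) = pathEnd u (q :: l₂)) : p = q := by
  have hp := pathEnd_apply_snd h₁ (nodup_of_increasing h₁ hc₁)
  have hq := pathEnd_apply_snd h₂ (nodup_of_increasing h₂ hc₂)
  have hmoved_p : u p.2 ≠ pathEnd u (q :: l₂) p.2 := by
    rw [← hend, hp]; exact h₁.2.2.1.ne'
  have hmoved_q : u q.2 ≠ pathEnd u (p :: l₁) q.2 := by
    rw [hend, hq]; exact h₂.2.2.1.ne'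
  have hsnd : p.2 = q.2 := (pathEnd u (p :: l₁)).injective <| le_antisymm
    (pathEnd_snd_le h₁ hc₁ h₂.2.1 hmoved_q)
    (hend ▸ pathEnd_snd_le h₂ hc₂ h₁.2.1 hmoved_p)
  have hfst : p.1 = q.1 := u.injective <| by rw [← hp, ← hq, hend, hsnd]
  exact Prod.ext hfst hsnd

lemma eq_of_increasing (h₁ : IsKPath k u l₁) (h₂ : IsKPath k u l₂)
    (hc₁ : (pathLabels u l₁).IsChain (· < ·)) (hc₂ : (pathLabels u l₂).IsChain (· < ·))
    (hend : pathEnd u l₁ = pathEnd u l₂) : l₁ = l₂ := by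
  induction l₁ generalizing u l₂ with
  | nil =>
    cases l₂ with
    | nil => rfl
    | cons q l₂ =>
      rw [pathEnd_nil] at hend
      exact absurd hend.symm (pathEnd_ne_self h₂ (nodup_of_increasing h₂ hc₂))
  | cons p l₁ ih =>
    cases l₂ with
    | nil =>
      rw [pathEnd_nil] at hend
      exact absurd hend (pathEnd_ne_self h₁ (nodup_of_increasing h₁ hc₁))
    | cons q l₂ =>
      obtain rfl := head_eq_of_increasing h₁ h₂ hc₁ hc₂ hend
      rw [ih h₁.2.2.2 h₂.2.2.2 hc₁.tail hc₂.tail (by rwa [pathEnd_cons, pathEnd_cons] at hend)]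

lemma pathLabels_perm {l' : List (Fin n × Fin n)} (h : IsKPath k u l) (h' : IsKPath k v l')
    (hnd : (l.map Prod.snd).Nodup) (hend : pathEnd v l' = pathEnd u l)
    (hperm : (l'.map Prod.snd).Perm (l.map Prod.snd)) :
    (pathLabels v l').Perm (pathLabels u l) := by
  rw [pathLabels_eq_map h hnd, pathLabels_eq_map h' (hperm.nodup_iff.2 hnd), hend]
  exact hperm.map _

lemma second_label_ne_first (h : IsKPath k u (p :: q :: s)) : (u * swap p.1 p.2) q.1 ≠ u p.1 := by
  have hp₂ : k ≤ p.2.val := h.2.1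
  have hq₁ : q.1.val < k := h.2.2.2.1
  rw [← mul_swap_apply_right u p.1 p.2]
  intro he
  rw [(u * swap p.1 p.2).injective he] at hq₁
  omega

lemma exchange (h : IsKPath k u (p :: q :: s)) (hb : p.2 ≠ q.2)
    (hlt : (u * swap p.1 p.2) q.1 < u p.1) :
    IsKPath k u (q :: p :: s) ∧ pathEnd u (q :: p :: s) = pathEnd u (p :: q :: s) ∧
      pathLabels u (q :: p :: s) =
        (u * swap p.1 p.2) q.1 :: u p.1 :: pathLabels (u * swap p.1 p.2 * swap q.1 q.2) s := by
  obtain ⟨hp₁, hp₂, hpu, hq₁, hq₂, hqu, hs⟩ := h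
  have ha : p.1 ≠ q.1 := by
    rintro hpq
    rw [← hpq, mul_swap_apply_left] at hlt
    exact lt_asymm hpu hlt
  have hne {x y : Fin n} (hx : x.val < k) (hy : k ≤ y.val) : x ≠ y := by
    rintro rfl; omega
  have hcomm : u * swap q.1 q.2 * swap p.1 p.2 = u * swap p.1 p.2 * swap q.1 q.2 := by
    have hdisj : Disjoint (swap p.1 p.2) (swap q.1 q.2) := disjoint_swap_swap <| by
      simp [hne hp₁ hp₂, hne hq₁ hq₂, ha, hne hp₁ hq₂, (hne hq₁ hp₂).symm, hb]
    rw [mul_assoc, mul_assoc, hdisj.commute.eq]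
  have hq₁u : (u * swap p.1 p.2) q.1 = u q.1 := mul_swap_apply_of_ne_of_ne u ha.symm (hne hq₁ hp₂)
  have hq₂u : (u * swap p.1 p.2) q.2 = u q.2 :=
    mul_swap_apply_of_ne_of_ne u (hne hp₁ hq₂).symm hb.symm
  have hp₁u : (u * swap q.1 q.2) p.1 = u p.1 := mul_swap_apply_of_ne_of_ne u ha (hne hp₁ hq₂)
  have hp₂u : (u * swap q.1 q.2) p.2 = u p.2 :=
    mul_swap_apply_of_ne_of_ne u (hne hq₁ hp₂).symm hb
  refine ⟨⟨hq₁, hq₂, ?_, hp₁, hp₂, ?_, ?_⟩, ?_, ?_⟩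
  · rwa [← hq₁u, ← hq₂u]
  · rwa [hp₁u, hp₂u]
  · rwa [hcomm]
  · rw [pathEnd_cons, pathEnd_cons, hcomm, pathEnd_cons, pathEnd_cons]
  · rw [pathLabels, pathLabels, hp₁u, hcomm, hq₁u]

lemma exists_increasing_of_cons (h : IsKPath k u (p :: l)) (hnd : ((p :: l).map Prod.snd).Nodup)
    (hc : (pathLabels (u * swap p.1 p.2) l).IsChain (· < ·)) :
    ∃ l', IsKPath k u l' ∧ pathEnd u l' = pathEnd u (p :: l) ∧
      (l'.map Prod.snd).Perm ((p :: l).map Prod.snd) ∧ (pathLabels u l').IsChain (· < ·) := by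
  induction l generalizing u p with
  | nil => exact ⟨[p], h, rfl, .refl _, List.isChain_singleton _⟩
  | cons q s ih =>
    rcases lt_or_gt_of_ne (second_label_ne_first h) with hlt | hgt
    swap
    · exact ⟨p :: q :: s, h, rfl, .refl _, List.isChain_cons_cons.2 ⟨hgt, hc⟩⟩
    rw [List.map_cons, List.map_cons, List.nodup_cons, List.nodup_cons, List.mem_cons,
      not_or] at hnd
    obtain ⟨hqp, hend, hlab⟩ := exchange h hnd.1.1 hlt
    obtain ⟨hlab₁, hlab₂⟩ := List.cons_eq_cons.1 hlab
    have hps : IsKPath k (u * swap q.1 q.2) (p :: s) := hqp.2.2.2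
    obtain ⟨l', hl', hend', hperm, hc'⟩ := ih hps (List.nodup_cons.2 ⟨hnd.1.2, hnd.2.2⟩)
      (by rw [(List.cons_eq_cons.1 hlab₂).2]; exact hc.tail)
    have hlabels := pathLabels_perm hps hl' (List.nodup_cons.2 ⟨hnd.1.2, hnd.2.2⟩) hend' hperm
    rw [hlab₂] at hlabels
    refine ⟨q :: l', ⟨hqp.1, hqp.2.1, hqp.2.2.1, hl'⟩, ?_, ?_, ?_⟩
    · rw [pathEnd_cons, hend', ← pathEnd_cons, hend]
    · exact (hperm.cons q.2).trans (.swap _ _ _)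
    · rw [pathLabels, hlab₁, List.isChain_iff_pairwise, List.pairwise_cons]
      refine ⟨fun y hy => ?_, List.isChain_iff_pairwise.1 hc'⟩
      rcases List.mem_cons.1 (hlabels.subset hy) with rfl | hy
      · exact hlt
      · exact (List.pairwise_cons.1 (List.isChain_iff_pairwise.1 hc)).1 y hy

lemma exists_increasing (h : IsKPath k u l) (hnd : (l.map Prod.snd).Nodup) :
    ∃ l', IsKPath k u l' ∧ pathEnd u l' = pathEnd u l ∧
      (l'.map Prod.snd).Perm (l.map Prod.snd) ∧ (pathLabels u l').IsChain (· < ·) := by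
  induction l generalizing u with
  | nil => exact ⟨[], trivial, rfl, .refl _, List.isChain_nil⟩
  | cons p l ih =>
    obtain ⟨hp₁, hp₂, hpu, h⟩ := h
    rw [List.map_cons, List.nodup_cons] at hnd
    obtain ⟨l', hl', hend, hperm, hc⟩ := ih h hnd.2
    obtain ⟨l'', hl'', hend', hperm', hc'⟩ := exists_increasing_of_cons ⟨hp₁, hp₂, hpu, hl'⟩
      (List.nodup_cons.2 ⟨fun hm => hnd.1 (hperm.subset hm), hperm.nodup_iff.2 hnd.2⟩) hc
    refine ⟨l'', hl'', ?_, hperm'.trans (hperm.cons _), hc'⟩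
    rw [hend', pathEnd_cons, hend, pathEnd_cons]

end IsKPath

theorem stmt10_general (n k r : ℕ) (u w : Equiv.Perm (Fin n)) :
    ((∃ l : List (Fin n × Fin n), IsKPath k u l ∧ pathEnd u l = w ∧ l.length = r ∧
        List.Chain' (· < ·) (pathLabels u l)) ↔
      (∃ l : List (Fin n × Fin n), IsKPath k u l ∧ pathEnd u l = w ∧ l.length = r ∧
        (l.map Prod.snd).Nodup)) ∧
      ∀ l₁ l₂ : List (Fin n × Fin n),
        IsKPath k u l₁ → pathEnd u l₁ = w → List.Chain' (· < ·) (pathLabels u l₁) →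
        IsKPath k u l₂ → pathEnd u l₂ = w → List.Chain' (· < ·) (pathLabels u l₂) →
        l₁ = l₂ := by
  refine ⟨⟨?_, ?_⟩, ?_⟩
  · rintro ⟨l, h, hend, hlen, hc⟩
    exact ⟨l, h, hend, hlen, h.nodup_of_increasing hc⟩
  · rintro ⟨l, h, rfl, rfl, hnd⟩
    obtain ⟨l', h', hend, hperm, hc⟩ := h.exists_increasing hnd
    exact ⟨l', h', hend, by simpa using hperm.length_eq, hc⟩
  · intro l₁ l₂ h₁ hend₁ hc₁ h₂ hend₂ hc₂
    exact h₁.eq_of_increasing h₂ hc₁ hc₂ (hend₁.trans hend₂.symm)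

/-- There is an increasing path (strictly increasing labels) of length `r`
from `u` to `w ≠ u` in the extended `k`-Bruhat order iff `w` can be reached
from `u` by `r` `k`-edges whose second coordinates `b₁,…,b_r` are pairwise
distinct; moreover the increasing path, when it exists, is unique. -/
theorem stmt10 (n k r : ℕ) (u w : Equiv.Perm (Fin n)) (hne : u ≠ w) :
    ((∃ l : List (Fin n × Fin n), IsKPath k u l ∧ pathEnd u l = w ∧ l.length = r ∧
        List.Chain' (· < ·) (pathLabels u l)) ↔
      (∃ l : List (Fin n × Fin n), IsKPath k u l ∧ pathEnd u l = w ∧ l.length = r ∧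
        (l.map Prod.snd).Nodup)) ∧
      ∀ l₁ l₂ : List (Fin n × Fin n),
        IsKPath k u l₁ → pathEnd u l₁ = w → List.Chain' (· < ·) (pathLabels u l₁) →
        IsKPath k u l₂ → pathEnd u l₂ = w → List.Chain' (· < ·) (pathLabels u l₂) →
        l₁ = l₂ :=
  stmt10_general n k r u w
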